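/- Let C be a pure simplicial complex with shedding face F, and suppose F_1,...,F_t are facets not in C that do not contain F and F_{t+1},...,F_q are facets not in C that contain F. If F is a shedding face of C + ⟨F_1,...,F_q⟩, then F is a shedding face of C + ⟨F_1,...,F_i⟩ for every 1 ≤ i ≤ q. -/

import Mathlib

open Finset

variable {V : Type*} [DecidableEq V]

/-- A simplicial complex: a finite collection of finite faces closed under subsets. -/
def IsComplex (C : Finset (Finset V)) : Prop :=
  ∀ F ∈ C, ∀ G, G ⊆ F → G ∈ C

/-- `F` is a facet (maximal face) of `C`. -/
def IsFacet (C : Finset (Finset V)) (F : Finset V) : Prop :=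
  F ∈ C ∧ ∀ G ∈ C, F ⊆ G → F = G

/-- `C` is pure of dimension `d`: all facets have cardinality `d+1`. -/
def IsPure (C : Finset (Finset V)) (d : ℕ) : Prop :=
  ∀ F, IsFacet C F → F.card = d + 1

/-- The deletion of a face `F`: all faces not containing `F`. -/
def del (C : Finset (Finset V)) (F : Finset V) : Finset (Finset V) :=
  C.filter (fun G => ¬ F ⊆ G)

/-- The link of a face `F`. -/
def lk (C : Finset (Finset V)) (F : Finset V) : Finset (Finset V) :=
  C.filter (fun G => G ∩ F = ∅ ∧ G ∪ F ∈ C)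

/-- The simplicial complex generated by a collection of faces. -/
def gen (S : Finset (Finset V)) : Finset (Finset V) :=
  S.biUnion Finset.powerset

/-- `C` is a (full) simplex. -/
def IsSimplexCx (C : Finset (Finset V)) : Prop :=
  ∃ F : Finset V, C = F.powerset

/-- `F` is a shedding face of the pure `d`-dimensional complex `C`. -/
def Shedding (C : Finset (Finset V)) (d : ℕ) (F : Finset V) : Prop :=
  F ∈ C ∧ IsPure (del C F) d

/-- `k`-decomposability (Provan–Billera): a simplex, or there is a shedding face `F`
with `dim F ≤ k` whose deletion and link are again `k`-decomposable. -/
inductive Decomp : ℕ → Finset (Finset V) → Prop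
  | simplex (k : ℕ) (C : Finset (Finset V)) : IsSimplexCx C → Decomp k C
  | shed (k : ℕ) (C : Finset (Finset V)) (F : Finset V) (d : ℕ) :
      F ∈ C → F.Nonempty → F.card ≤ k + 1 → IsPure C d → IsPure (del C F) d →
      Decomp k (del C F) → Decomp k (lk C F) → Decomp k C

/-- The 1-dimensional skeleton of a complex, as a simple graph. -/
def skel (C : Finset (Finset V)) : SimpleGraph V where
  Adj x y := x ≠ y ∧ ({x, y} : Finset V) ∈ C
  symm := by
    constructor
    rintro x y ⟨hxy, hm⟩
    exact ⟨hxy.symm, by rwa [Finset.pair_comm]⟩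
  loopless := ⟨fun x h => h.1 rfl⟩

/-- A shelling of a pure `d`-dimensional complex: an ordering of the facets such that
each facet meets the union of the previous ones in a pure `(d-1)`-dimensional complex. -/
def IsShelling (C : Finset (Finset V)) (d : ℕ) (L : List (Finset V)) : Prop :=
  L.Nodup ∧ (∀ F, IsFacet C F ↔ F ∈ L) ∧
  ∀ i : ℕ, 1 ≤ i → ∀ h : i < L.length,
    IsPure (gen (L.take i).toFinset ∩ (L.get ⟨i, h⟩).powerset) (d - 1)

open scoped Classical in
/-- `full^d(G)`: the pure `d`-dimensional complex generated by all `(d+1)`-cliques of `G`. -/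
noncomputable def fullC [Fintype V] (d : ℕ) (G : SimpleGraph V) : Finset (Finset V) :=
  gen ((Finset.univ.powerset).filter fun s => G.IsClique (↑s : Set V) ∧ s.card = d + 1)

open scoped Classical in
/-- All `(d+1)`-cliques of `G` containing the set `e`. -/
noncomputable def cliquesWith [Fintype V] (d : ℕ) (G : SimpleGraph V) (e : Finset V) :
    Finset (Finset V) :=
  (Finset.univ.powerset).filter fun s => G.IsClique (↑s : Set V) ∧ s.card = d + 1 ∧ e ⊆ s

/-- `G^H`: join every vertex of `H` to every other vertex. -/
def coneGraph (G : SimpleGraph V) (H : Finset V) : SimpleGraph V where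
  Adj x y := x ≠ y ∧ (G.Adj x y ∨ x ∈ H ∨ y ∈ H)
  symm := by
    constructor
    rintro x y ⟨hxy, h⟩
    refine ⟨hxy.symm, ?_⟩
    rcases h with h | h | h
    · exact Or.inl (G.adj_symm h)
    · exact Or.inr (Or.inr h)
    · exact Or.inr (Or.inl h)
  loopless := ⟨fun x h => h.1 rfl⟩

/-- The graph `G` together with the extra edge `ab`. -/
def addEdge (G : SimpleGraph V) (a b : V) : SimpleGraph V :=
  G ⊔ SimpleGraph.fromEdgeSet {s(a, b)}

/-- `C` is fully coned with respect to `H`: every vertex of `H` is adjacent to every other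
vertex of `skel C`, and every `(d+1)`-clique of `skel C` is a facet of `C`. -/
def FullyConed (C : Finset (Finset V)) (d : ℕ) (H : Finset V) : Prop :=
  (∀ h ∈ H, ∀ v : V, ({v} : Finset V) ∈ C → v ≠ h → (skel C).Adj h v) ∧
  (∀ s : Finset V, (skel C).IsClique (↑s : Set V) → s.card = d + 1 → IsFacet C s)

/-! A complex is pure of dimension `d` iff each face lies in a face with `d + 1` vertices.
A face `H` of the `i`-th deletion lies in `C` (use that `F` sheds `C`), in a new facet avoiding
`F` (which is such a face), or in a new facet containing `F`. In the last case every facet avoiding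
`F` has already been added, and a `(d + 1)`-face of the full deletion lies in `C` or in one of
them, because a `(d + 1)`-subset of a new facet containing `F` is that facet. -/

lemma mem_gen {S : Finset (Finset V)} {G : Finset V} : G ∈ gen S ↔ ∃ s ∈ S, G ⊆ s := by
  simp [gen]

lemma gen_mono {S T : Finset (Finset V)} (h : S ⊆ T) : gen S ⊆ gen T :=
  fun _ hG ↦ let ⟨s, hs, hGs⟩ := mem_gen.1 hG; mem_gen.2 ⟨s, h hs, hGs⟩

lemma gen_toFinset_mono {L L' : List (Finset V)} (h : L ⊆ L') :
    gen L.toFinset ⊆ gen L'.toFinset :=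
  gen_mono fun _ hG ↦ List.mem_toFinset.2 (h (List.mem_toFinset.1 hG))

lemma exists_isFacet_superset {K : Finset (Finset V)} {H : Finset V} (hH : H ∈ K) :
    ∃ M, IsFacet K M ∧ H ⊆ M := by
  obtain ⟨M, hM, hmax⟩ := (K.filter (H ⊆ ·)).exists_maximal ⟨H, by simp [hH]⟩
  rw [mem_filter] at hM
  exact ⟨M, ⟨hM.1, fun G hG hMG ↦ le_antisymm hMG
    (hmax (mem_filter.2 ⟨hG, hM.2.trans hMG⟩) hMG)⟩, hM.2⟩

lemma isPure_iff_forall_exists_superset {K : Finset (Finset V)} {d : ℕ} :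
    IsPure K d ↔ ∀ H ∈ K, ∃ M ∈ K, H ⊆ M ∧ M.card = d + 1 := by
  refine ⟨fun hK H hH ↦ ?_, fun hK H hH ↦ ?_⟩
  · obtain ⟨M, hM, hHM⟩ := exists_isFacet_superset hH
    exact ⟨M, hM.1, hHM, hK M hM⟩
  · obtain ⟨M, hM, hHM, hMc⟩ := hK H hH.1
    rwa [hH.2 M hM hHM]

lemma mem_del {K : Finset (Finset V)} {F G : Finset V} : G ∈ del K F ↔ G ∈ K ∧ ¬ F ⊆ G :=
  mem_filter

lemma del_mono {K K' : Finset (Finset V)} (F : Finset V) (h : K ⊆ K') : del K F ⊆ del K' F :=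
  filter_subset_filter _ h

lemma mem_gen_left_of_card_eq {L₁ L₂ : List (Finset V)} {F M : Finset V} {n : ℕ}
    (h₂ : ∀ G ∈ L₂, G.card = n ∧ F ⊆ G) (hM : M ∈ gen (L₁ ++ L₂).toFinset) (hFM : ¬ F ⊆ M)
    (hMc : M.card = n) : M ∈ gen L₁.toFinset := by
  obtain ⟨G, hG, hMG⟩ := mem_gen.1 hM
  rcases List.mem_append.1 (List.mem_toFinset.1 hG) with hG₁ | hG₂
  · exact mem_gen.2 ⟨G, List.mem_toFinset.2 hG₁, hMG⟩
  · have hGc := h₂ G hG₂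
    exact absurd (eq_of_subset_of_card_le hMG (hMc ▸ hGc.1.le) ▸ hGc.2) hFM

lemma List.subset_take_append_of_mem {α : Type*} {L₁ L₂ : List α} {i : ℕ} {x : α}
    (hx : x ∈ (L₁ ++ L₂).take i) (hx₁ : x ∉ L₁) : L₁ ⊆ (L₁ ++ L₂).take i := by
  rw [List.take_append] at hx ⊢
  rcases List.mem_append.1 hx with hx | hx
  · exact absurd (List.mem_of_mem_take hx) hx₁
  · have : L₁.length ≤ i := by
      by_contra! h
      simp [Nat.sub_eq_zero_of_le h.le] at hx
    rw [List.take_of_length_le this]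
    exact List.subset_append_left _ _

theorem shedding_persists_general (C : Finset (Finset V)) (d : ℕ) (F : Finset V)
    (L₁ L₂ : List (Finset V))
    (hshed : Shedding C d F)
    (h₁ : ∀ G ∈ L₁, G ∉ C ∧ G.card = d + 1 ∧ ¬ F ⊆ G)
    (h₂ : ∀ G ∈ L₂, G ∉ C ∧ G.card = d + 1 ∧ F ⊆ G)
    (hfull : Shedding (C ∪ gen (L₁ ++ L₂).toFinset) d F) :
    ∀ i : ℕ, 1 ≤ i → i ≤ (L₁ ++ L₂).length →
      Shedding (C ∪ gen ((L₁ ++ L₂).take i).toFinset) d F := by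
  intro i _ _
  refine ⟨mem_union_left _ hshed.1, isPure_iff_forall_exists_superset.2 fun H hH ↦ ?_⟩
  obtain ⟨hH, hFH⟩ := mem_del.1 hH
  rcases mem_union.1 hH with hHC | hHgen
  · obtain ⟨M, hM, hHM, hMc⟩ :=
      isPure_iff_forall_exists_superset.1 hshed.2 H (mem_del.2 ⟨hHC, hFH⟩)
    exact ⟨M, del_mono F subset_union_left hM, hHM, hMc⟩
  obtain ⟨G, hG, hHG⟩ := mem_gen.1 hHgen
  have hG' := List.mem_toFinset.1 hG
  rcases List.mem_append.1 (List.mem_of_mem_take hG') with hG₁ | hG₂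
  · exact ⟨G, mem_del.2 ⟨mem_union_right _ (mem_gen.2 ⟨G, hG, subset_rfl⟩), (h₁ G hG₁).2.2⟩,
      hHG, (h₁ G hG₁).2.1⟩
  have hL₁ := List.subset_take_append_of_mem hG' fun hG₁ ↦ (h₁ G hG₁).2.2 (h₂ G hG₂).2.2
  obtain ⟨M, hM, hHM, hMc⟩ := isPure_iff_forall_exists_superset.1 hfull.2 H
    (del_mono F (union_subset_union_right (gen_toFinset_mono (List.take_subset _ _)))
      (mem_del.2 ⟨hH, hFH⟩))
  obtain ⟨hM, hFM⟩ := mem_del.1 hM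
  have hM' : M ∈ C ∪ gen L₁.toFinset := mem_union.2 <| (mem_union.1 hM).imp_right
    (mem_gen_left_of_card_eq (fun G hG ↦ (h₂ G hG).2) · hFM hMc)
  exact ⟨M, mem_del.2 ⟨union_subset_union_right (gen_toFinset_mono hL₁) hM', hFM⟩, hHM, hMc⟩

/-- If `F` stays a shedding face after adding all the new facets (those avoiding `F`
listed first), then it is a shedding face at each intermediate step. -/
theorem shedding_persists (C : Finset (Finset V)) (d : ℕ) (F : Finset V)
    (L₁ L₂ : List (Finset V))
    (hC : IsComplex C) (hP : IsPure C d) (hshed : Shedding C d F)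
    (h₁ : ∀ G ∈ L₁, G ∉ C ∧ G.card = d + 1 ∧ ¬ F ⊆ G)
    (h₂ : ∀ G ∈ L₂, G ∉ C ∧ G.card = d + 1 ∧ F ⊆ G)
    (hfull : Shedding (C ∪ gen (L₁ ++ L₂).toFinset) d F) :
    ∀ i : ℕ, 1 ≤ i → i ≤ (L₁ ++ L₂).length →
      Shedding (C ∪ gen ((L₁ ++ L₂).take i).toFinset) d F :=
  shedding_persists_general C d F L₁ L₂ hshed h₁ h₂ hfull
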